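/- arXiv:2508.14265 — 5 statements merged into one kernel-verified Lean document; each statement's English description precedes it below -/
import Mathlib

section
/- Let m ≥ 2 and let φ : F₂^(m+1) → F₂^(m-1) and h : F₂^(m+1) → F₂. Define f : F₂^(m-1) × F₂^(m+1) → F₂ by f(x,y) = x·φ(y) + h(y). Then f is bent (i.e., its Walsh transform takes only values ±2^m) if and only if (1) for every a ∈ F₂^(m-1), the preimage φ⁻¹(a) is a 2-dimensional affine subspace of F₂^(m+1) (so these preimages form a partition of F₂^(m+1) into 2-dimensional flats), and (2) for every a ∈ F₂^(m-1), the restriction of h to φ⁻¹(a) has odd Hamming weight. -/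
open Finset

/-- Dot product on `F₂^k`. -/
def dotp {k : ℕ} (x y : Fin k → ZMod 2) : ZMod 2 := ∑ i, x i * y i

/-- The character `z ↦ (-1)^z`. -/
def chr (z : ZMod 2) : ℤ := (-1 : ℤ) ^ z.val

/-- Walsh–Hadamard transform of a Boolean function on `F₂^p × F₂^q`. -/
def walshP {p q : ℕ} (f : (Fin p → ZMod 2) × (Fin q → ZMod 2) → ZMod 2)
    (a : Fin p → ZMod 2) (b : Fin q → ZMod 2) : ℤ :=
  ∑ x : Fin p → ZMod 2, ∑ y : Fin q → ZMod 2, chr (f (x, y) + dotp a x + dotp b y)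

/-- `S` is a 2-dimensional affine subspace (flat) of `F₂^k`. -/
def Is2Flat {k : ℕ} (S : Set (Fin k → ZMod 2)) : Prop :=
  ∃ (c : Fin k → ZMod 2) (W : Submodule (ZMod 2) (Fin k → ZMod 2)),
    Module.finrank (ZMod 2) ↥W = 2 ∧ S = (fun w => c + w) '' (W : Set (Fin k → ZMod 2))

/-!
Summing over `x` first gives `W_f(a, b) = 2^(m-1) T_a(b)`, where
`T_a(b) = ∑_{y ∈ φ⁻¹(a)} (-1)^(h y + b·y)` is the Walsh transform of `h` restricted to the
fibre `φ⁻¹(a)`; so `f` is bent iff `|T_a(b)| = 2` for all `a, b`. Parseval,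
`∑_b T_a(b)² = 2^(m+1) |φ⁻¹(a)|`, then forces every fibre to have four points, and on a
four-point set `|T_a(b)| = 2` says `∑_y (h y + b·y) = 1` in `F₂`. For all `b` at once this
means that the points of the fibre sum to zero and that `h` has odd weight on it; and a
four-point set whose points sum to zero is exactly a 2-flat `{c, c + u, c + v, c + u + v}`.
-/
lemma zmod_two_eq_zero_or_one : ∀ a : ZMod 2, a = 0 ∨ a = 1 := by decide

lemma chr_add : ∀ a b : ZMod 2, chr (a + b) = chr a * chr b := by decide

lemma sum_chr_eq_card_sub {α : Type*} (s : Finset α) (g : α → ZMod 2) :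
    ∑ y ∈ s, chr (g y) = #s - 2 * #(s.filter (g · = 1)) := by
  have hchr : ∀ z : ZMod 2, chr z = 1 - 2 * if z = 1 then 1 else 0 := by decide
  simp only [hchr, sum_sub_distrib, ← mul_sum, sum_boole, sum_const, nsmul_one]

lemma sum_eq_one_iff_odd_card_filter {α : Type*} (s : Finset α) (g : α → ZMod 2) :
    ∑ y ∈ s, g y = 1 ↔ Odd #(s.filter (g · = 1)) := by
  have hg : ∀ z : ZMod 2, z = if z = 1 then 1 else 0 := by decide
  rw [sum_congr rfl fun y _ => hg (g y), sum_boole, ZMod.natCast_eq_one_iff_odd]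

lemma abs_sum_chr_eq_two_iff {α : Type*} {s : Finset α} (hs : #s = 4) (g : α → ZMod 2) :
    |∑ y ∈ s, chr (g y)| = 2 ↔ ∑ y ∈ s, g y = 1 := by
  have hle := (card_filter_le s (g · = 1)).trans hs.le
  rw [sum_chr_eq_card_sub, sum_eq_one_iff_odd_card_filter, hs, Nat.odd_iff, abs_eq two_pos.le]
  omega

lemma dotp_eq_dotProduct {k : ℕ} (x y : Fin k → ZMod 2) : dotp x y = x ⬝ᵥ y := rfl

lemma sum_chr_dotp {k : ℕ} (v : Fin k → ZMod 2) :
    ∑ x, chr (dotp x v) = if v = 0 then 2 ^ k else 0 := by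
  split_ifs with hv
  · simp [hv, dotp_eq_dotProduct, chr]
  · obtain ⟨i, hi⟩ := Function.ne_iff.mp hv
    have hflip (x : Fin k → ZMod 2) : chr (dotp (x + Pi.single i 1) v) = -chr (dotp x v) := by
      have hvi : v i = 1 := (zmod_two_eq_zero_or_one _).resolve_left hi
      rw [dotp_eq_dotProduct, add_dotProduct, single_one_dotProduct, hvi, chr_add,
        show chr 1 = -1 from rfl, mul_neg_one]
      rfl
    have := Fintype.sum_equiv (Equiv.addRight (Pi.single i 1)) (fun x => -chr (dotp x v))
      (fun x => chr (dotp x v)) fun x => (hflip x).symm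
    rw [sum_neg_distrib] at this
    linarith

section Flat

variable {V : Type*} [AddCommGroup V] [Module (ZMod 2) V]

lemma coe_span_pair_zmod_two (u v : V) :
    (Submodule.span (ZMod 2) {u, v} : Set V) = {0, u, v, u + v} := by
  ext w
  simp only [SetLike.mem_coe, Submodule.mem_span_pair, Set.mem_insert_iff, Set.mem_singleton_iff]
  constructor
  · rintro ⟨a, b, rfl⟩
    rcases zmod_two_eq_zero_or_one a with rfl | rfl <;>
      rcases zmod_two_eq_zero_or_one b with rfl | rfl <;> simp
  · rintro (rfl | rfl | rfl | rfl)
    exacts [⟨0, 0, by simp⟩, ⟨1, 0, by simp⟩, ⟨0, 1, by simp⟩, ⟨1, 1, by simp⟩]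

lemma linearIndependent_pair_zmod_two_iff (u v : V) :
    LinearIndependent (ZMod 2) ![u, v] ↔ u ≠ 0 ∧ v ≠ 0 ∧ u ≠ v := by
  rw [LinearIndependent.pair_iff]
  constructor
  · intro h
    refine ⟨fun hu => ?_, fun hv => ?_, fun huv => ?_⟩
    · simpa using h 1 0 (by simp [hu])
    · simpa using h 0 1 (by simp [hv])
    · simpa using h 1 1 (by simp [huv, ZModModule.add_self])
  · rintro ⟨hu, hv, huv⟩ a b
    rcases zmod_two_eq_zero_or_one a with rfl | rfl <;>
      rcases zmod_two_eq_zero_or_one b with rfl | rfl <;>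
      simp [hu, hv, add_eq_zero_iff_eq_neg, ZModModule.neg_eq_self, huv]

lemma card_eq_four_and_sum_eq_zero_iff [DecidableEq V] (s : Finset V) :
    #s = 4 ∧ ∑ y ∈ s, y = 0 ↔
      ∃ c u v, LinearIndependent (ZMod 2) ![u, v] ∧ s = {c, c + u, c + v, c + u + v} := by
  simp_rw [linearIndependent_pair_zmod_two_iff]
  constructor
  · rintro ⟨hcard, hsum⟩
    obtain ⟨x, y, z, w, hxy, hxz, hxw, hyz, hyw, hzw, rfl⟩ := card_eq_four.mp hcard
    have hw : w = x + y + z := by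
      rwa [sum_insert (by simp [hxy, hxz, hxw]), sum_insert (by simp [hyz, hyw]), sum_pair hzw,
        ← add_assoc, ← add_assoc, add_eq_zero_iff_eq_neg', ZModModule.neg_eq_self] at hsum
    refine ⟨x, x + y, x + z, ⟨?_, ?_, ?_⟩, ?_⟩
    · simpa [add_eq_zero_iff_eq_neg, ZModModule.neg_eq_self] using hxy
    · simpa [add_eq_zero_iff_eq_neg, ZModModule.neg_eq_self] using hxz
    · simpa using hyz
    · have hx : ∀ a : V, x + (x + a) = a := fun a => by
        rw [← add_assoc, ZModModule.add_self, zero_add]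
      rw [hw, hx, hx]
      congr 4
      abel
  · rintro ⟨c, u, v, ⟨hu, hv, huv⟩, rfl⟩
    have huv' : u + v ≠ 0 := by
      rwa [Ne, add_eq_zero_iff_eq_neg, ZModModule.neg_eq_self]
    have hdistinct : c ≠ c + u ∧ c ≠ c + v ∧ c ≠ c + u + v ∧ c + u ≠ c + v ∧
        c + u ≠ c + u + v ∧ c + v ≠ c + u + v := by
      simp [add_assoc, hu, hv, huv, huv']
    obtain ⟨h1, h2, h3, h4, h5, h6⟩ := hdistinct
    refine ⟨card_eq_four.mpr ⟨_, _, _, _, h1, h2, h3, h4, h5, h6, rfl⟩, ?_⟩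
    rw [sum_insert (by simp only [mem_insert, mem_singleton, not_or]; exact ⟨h1, h2, h3⟩),
      sum_insert (by simp only [mem_insert, mem_singleton, not_or]; exact ⟨h4, h5⟩), sum_pair h6,
      show c + (c + u + (c + v + (c + u + v))) = (c + c) + (c + c) + (u + u) + (v + v) by abel]
    simp [ZModModule.add_self]

end Flat

lemma is2Flat_iff_exists_linearIndependent_pair {k : ℕ} (S : Set (Fin k → ZMod 2)) :
    Is2Flat S ↔
      ∃ c u v, LinearIndependent (ZMod 2) ![u, v] ∧ S = {c, c + u, c + v, c + u + v} := by
  have translate (c u v : Fin k → ZMod 2) :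
      (c + ·) '' (Submodule.span (ZMod 2) {u, v} : Set (Fin k → ZMod 2)) =
        {c, c + u, c + v, c + u + v} := by
    simp [coe_span_pair_zmod_two, Set.image_insert_eq, add_assoc]
  constructor
  · rintro ⟨c, W, hW, rfl⟩
    let b := Module.finBasisOfFinrankEq (ZMod 2) W hW
    obtain ⟨v, hv, hspan⟩ : ∃ v : Fin 2 → Fin k → ZMod 2,
        LinearIndependent (ZMod 2) v ∧ Submodule.span (ZMod 2) (Set.range v) = W :=
      ⟨W.subtype ∘ b, b.linearIndependent.map' _ W.ker_subtype, by
        rw [Set.range_comp, Submodule.span_image, b.span_eq, Submodule.map_top,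
          Submodule.range_subtype]⟩
    have hv2 : v = ![v 0, v 1] := by ext i; fin_cases i <;> rfl
    rw [hv2] at hv hspan
    rw [Matrix.range_cons_cons_empty] at hspan
    exact ⟨c, v 0, v 1, hv, by rw [← translate, hspan]⟩
  · rintro ⟨c, u, v, hli, rfl⟩
    refine ⟨c, Submodule.span (ZMod 2) {u, v}, ?_, (translate c u v).symm⟩
    rw [← Matrix.range_cons_cons_empty u v ![], finrank_span_eq_card hli, Fintype.card_fin]

lemma is2Flat_coe_iff {k : ℕ} (s : Finset (Fin k → ZMod 2)) :
    Is2Flat (s : Set (Fin k → ZMod 2)) ↔ #s = 4 ∧ ∑ y ∈ s, y = 0 := by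
  rw [is2Flat_iff_exists_linearIndependent_pair, card_eq_four_and_sum_eq_zero_iff]
  simp_rw [← coe_inj, coe_insert, coe_singleton]

def walshOn {k : ℕ} (s : Finset (Fin k → ZMod 2)) (h : (Fin k → ZMod 2) → ZMod 2)
    (b : Fin k → ZMod 2) : ℤ :=
  ∑ y ∈ s, chr (h y + dotp b y)

lemma sum_walshOn_sq {k : ℕ} (s : Finset (Fin k → ZMod 2)) (h : (Fin k → ZMod 2) → ZMod 2) :
    ∑ b, walshOn s h b ^ 2 = 2 ^ k * #s := by
  have hsq (b : Fin k → ZMod 2) : walshOn s h b ^ 2 =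
      ∑ y ∈ s, ∑ y' ∈ s, chr (h y + h y') * chr (dotp b (y + y')) := by
    rw [walshOn, sq, sum_mul_sum]
    refine sum_congr rfl fun y _ => sum_congr rfl fun y' _ => ?_
    rw [← chr_add, ← chr_add, dotp_eq_dotProduct, dotp_eq_dotProduct, dotp_eq_dotProduct,
      dotProduct_add]
    ring_nf
  calc ∑ b, walshOn s h b ^ 2
      = ∑ y ∈ s, ∑ y' ∈ s, chr (h y + h y') * ∑ b, chr (dotp b (y + y')) := by
        simp_rw [hsq, mul_sum]
        rw [sum_comm]
        exact sum_congr rfl fun _ _ => sum_comm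
    _ = ∑ y ∈ s, 2 ^ k := by
        refine sum_congr rfl fun y hy => ?_
        simp_rw [sum_chr_dotp, add_eq_zero_iff_eq_neg, ZModModule.neg_eq_self, mul_ite, mul_zero]
        rw [sum_ite_eq s y, if_pos hy, ZModModule.add_self, show chr 0 = 1 from rfl, one_mul]
    _ = 2 ^ k * #s := by rw [sum_const, nsmul_eq_mul, mul_comm]

lemma walshP_eq_two_pow_mul_walshOn {p q : ℕ} (φ : (Fin q → ZMod 2) → (Fin p → ZMod 2))
    (h : (Fin q → ZMod 2) → ZMod 2) (f : (Fin p → ZMod 2) × (Fin q → ZMod 2) → ZMod 2)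
    (hf : ∀ x y, f (x, y) = dotp x (φ y) + h y) (a : Fin p → ZMod 2) (b : Fin q → ZMod 2) :
    walshP f a b = 2 ^ p * walshOn (univ.filter (φ · = a)) h b := by
  have hinner (y : Fin q → ZMod 2) : ∑ x, chr (f (x, y) + dotp a x + dotp b y) =
      if φ y = a then 2 ^ p * chr (h y + dotp b y) else 0 := by
    have harg (x : Fin p → ZMod 2) :
        f (x, y) + dotp a x + dotp b y = (h y + dotp b y) + dotp x (φ y + a) := by
      simp only [hf, dotp_eq_dotProduct, dotProduct_add, dotProduct_comm x a]
      ring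
    simp only [harg, chr_add, ← mul_sum, sum_chr_dotp, add_eq_zero_iff_eq_neg,
      ZModModule.neg_eq_self]
    split_ifs <;> ring
  rw [walshP, sum_comm, walshOn, sum_filter, mul_sum]
  exact sum_congr rfl fun y _ => by rw [hinner, mul_ite, mul_zero]

lemma card_eq_four_of_forall_abs_walshOn_eq_two {k : ℕ} {s : Finset (Fin k → ZMod 2)}
    {h : (Fin k → ZMod 2) → ZMod 2} (hT : ∀ b, |walshOn s h b| = 2) : #s = 4 := by
  have hsq (b : Fin k → ZMod 2) : walshOn s h b ^ 2 = 4 := by rw [← sq_abs, hT]; norm_num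
  have hsum := sum_walshOn_sq s h
  rw [sum_congr rfl fun b _ => hsq b, sum_const, card_univ, Fintype.card_fun, ZMod.card,
    Fintype.card_fin, nsmul_eq_mul] at hsum
  push_cast at hsum
  exact_mod_cast (mul_left_cancel₀ (pow_ne_zero k two_ne_zero) hsum).symm

lemma forall_add_dotp_eq_one_iff {k : ℕ} (c : ZMod 2) (z : Fin k → ZMod 2) :
    (∀ b, c + dotp b z = 1) ↔ z = 0 ∧ c = 1 := by
  constructor
  · intro hb
    have hc : c = 1 := by simpa [dotp_eq_dotProduct] using hb 0
    refine ⟨dotProduct_eq_zero z fun b => ?_, hc⟩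
    simpa [hc, dotp_eq_dotProduct, dotProduct_comm] using hb b
  · rintro ⟨rfl, rfl⟩ b
    simp [dotp_eq_dotProduct]

lemma forall_abs_walshOn_eq_two_iff {k : ℕ} (s : Finset (Fin k → ZMod 2))
    (h : (Fin k → ZMod 2) → ZMod 2) :
    (∀ b, |walshOn s h b| = 2) ↔
      Is2Flat (s : Set (Fin k → ZMod 2)) ∧ Odd #(s.filter (h · = 1)) := by
  rw [is2Flat_coe_iff, ← sum_eq_one_iff_odd_card_filter, and_assoc]
  suffices hs4 :
      #s = 4 → ((∀ b, |walshOn s h b| = 2) ↔ ∑ y ∈ s, y = 0 ∧ ∑ y ∈ s, h y = 1) from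
    ⟨fun hT => have hs := card_eq_four_of_forall_abs_walshOn_eq_two hT; ⟨hs, (hs4 hs).mp hT⟩,
      fun ⟨hs, hz⟩ => (hs4 hs).mpr hz⟩
  intro hs
  have hsplit (b : Fin k → ZMod 2) :
      ∑ y ∈ s, (h y + dotp b y) = ∑ y ∈ s, h y + dotp b (∑ y ∈ s, y) := by
    rw [sum_add_distrib, dotp_eq_dotProduct, dotProduct_sum]
    rfl
  simp_rw [walshOn, abs_sum_chr_eq_two_iff hs, hsplit]
  exact forall_add_dotp_eq_one_iff _ _

/-- full characterization of bentness of
`f(x,y) = x·φ(y) + h(y)` on `F₂^{m-1} × F₂^{m+1}`. -/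
theorem bent_iff_flat_partition_and_odd_weight {m : ℕ} (hm : 2 ≤ m)
    (φ : (Fin (m + 1) → ZMod 2) → (Fin (m - 1) → ZMod 2))
    (h : (Fin (m + 1) → ZMod 2) → ZMod 2)
    (f : (Fin (m - 1) → ZMod 2) × (Fin (m + 1) → ZMod 2) → ZMod 2)
    (hf : ∀ x y, f (x, y) = dotp x (φ y) + h y) :
    (∀ a b, walshP f a b = 2 ^ m ∨ walshP f a b = -(2 ^ m)) ↔
      ((∀ a, Is2Flat {y | φ y = a}) ∧
        (∀ a, Odd ((Finset.univ.filter fun y => φ y = a ∧ h y = 1)).card)) := by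
  have hpow : (2 : ℤ) ^ m = 2 ^ (m - 1) * 2 := by rw [← pow_succ, Nat.sub_add_cancel (by omega)]
  have hfiber (a : Fin (m - 1) → ZMod 2) :
      {y | φ y = a} = ((univ.filter (φ · = a) : Finset _) : Set (Fin (m + 1) → ZMod 2)) := by
    ext; simp
  simp_rw [← abs_eq (by positivity : (0 : ℤ) ≤ 2 ^ m), walshP_eq_two_pow_mul_walshOn φ h f hf,
    hpow, abs_mul, abs_pow, abs_two, mul_right_inj' (by positivity : (2 : ℤ) ^ (m - 1) ≠ 0),
    forall_abs_walshOn_eq_two_iff, hfiber, filter_filter]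
  exact forall_and
end

section
/- Let f : F₂^n → F₂ (n = 2m even) be bent of the form f(x,y) = x·φ(y) + h(y) with x ∈ F₂^(m-1), y ∈ F₂^(m+1), where the preimages φ⁻¹(z) are 2-dimensional affine subspaces. Suppose there exists a nonzero v ∈ F₂^(m+1) such that for every z ∈ F₂^(m-1), v lies in the direction space of the affine subspace φ⁻¹(z) (i.e., v ∈ w_z + φ⁻¹(z) for some w_z ∈ φ⁻¹(z)). Then the m-dimensional subspace V = ⟨F₂^(m-1) × {0}, (0, v)⟩ satisfies D_a D_b f = 0 for all a, b ∈ V; in particular f belongs to the completed Maiorana–McFarland class. -/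
/-!
Writing `v = w + u` with `w, u ∈ φ⁻¹(z)` puts `v` in the direction space of the flat `φ⁻¹(z)`,
so translation by `v` preserves every fibre: `v` is a period of `φ`. The subspace in question is
`F₂^(m-1) × ⟨v⟩`, so for `a, b` in it `φ` is constant on `p + ⟨a, b⟩`. There `f` is the sum of
the linear function `x ↦ x · φ(y)` and of `h` restricted to a line, and both have vanishing
second derivatives in characteristic two.
-/

open Finset

lemma dotp_add_left {k : ℕ} (x y z : Fin k → ZMod 2) :
    dotp (x + y) z = dotp x z + dotp y z := by
  simp [dotp, add_mul, Finset.sum_add_distrib]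

namespace Submodule

variable {K M N : Type*} [DivisionRing K] [AddCommGroup M] [AddCommGroup N] [Module K M]
  [Module K N]

theorem finrank_prod [FiniteDimensional K M] [FiniteDimensional K N] (p : Submodule K M)
    (q : Submodule K N) :
    Module.finrank K (p.prod q) = Module.finrank K p + Module.finrank K q := by
  rw [← Module.finrank_prod, ← LinearMap.finrank_range_of_inj
    (f := p.subtype.prodMap q.subtype) (Prod.map_injective.mpr ⟨p.injective_subtype,
      q.injective_subtype⟩), LinearMap.range_prodMap, range_subtype, range_subtype]

theorem span_setOf_snd_eq_zero_union_singleton (v : N) :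
    span K ({p : M × N | p.2 = 0} ∪ {(0, v)}) = (⊤ : Submodule K M).prod (K ∙ v) := by
  have hfst : {p : M × N | p.2 = 0} = ((⊤ : Submodule K M).prod (⊥ : Submodule K N) : Set _) := by
    ext; simp
  have hinr : span K {((0 : M), v)} = (⊥ : Submodule K M).prod (K ∙ v) := by
    rw [← map_inr, map_span, Set.image_singleton, LinearMap.inr_apply]
  rw [span_union, hfst, span_eq, hinr, prod_sup_prod, top_sup_eq, bot_sup_eq]

end Submodule

theorem add_sub_mem_image_add_left {R G : Type*} [Ring R] [AddCommGroup G] [Module R G]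
    {c y w u : G} {W : Submodule R G} (hy : y ∈ (c + ·) '' (W : Set G)) (hw : w ∈ (c + ·) '' (W : Set G))
    (hu : u ∈ (c + ·) '' (W : Set G)) : y + (w - u) ∈ (c + ·) '' (W : Set G) := by
  obtain ⟨y, hy, rfl⟩ := hy
  obtain ⟨w, hw, rfl⟩ := hw
  obtain ⟨u, hu, rfl⟩ := hu
  exact ⟨y + (w - u), W.add_mem hy (W.sub_mem hw hu), by simp only; abel⟩

section ZModTwo

variable {G : Type*} [AddCommGroup G] [Module (ZMod 2) G]

theorem ZModModule.mem_span_singleton_two {v t : G} : t ∈ (ZMod 2) ∙ v ↔ t = 0 ∨ t = v := by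
  refine ⟨fun ht => ?_, ?_⟩
  · obtain ⟨c, rfl⟩ := Submodule.mem_span_singleton.mp ht
    fin_cases c
    · left; exact zero_smul _ v
    · right; exact one_smul _ v
  · rintro (rfl | rfl)
    exacts [zero_mem _, Submodule.mem_span_singleton_self _]

theorem add_add_add_eq_zero_of_mem_span_singleton {R : Type*} [AddCommGroup R]
    [Module (ZMod 2) R] (g : G → R) {v s t : G} (hs : s ∈ (ZMod 2) ∙ v)
    (ht : t ∈ (ZMod 2) ∙ v) (y : G) : g y + g (y + s) + g (y + t) + g (y + s + t) = 0 := by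
  rcases ZModModule.mem_span_singleton_two.mp hs with rfl | rfl <;>
    rcases ZModModule.mem_span_singleton_two.mp ht with rfl | rfl
  · simp only [add_zero, ZModModule.add_self, zero_add]
  · simp only [add_zero, ZModModule.add_self, zero_add]
  · rw [add_zero, add_zero, add_assoc (g y + _), ZModModule.add_self]
  · rw [add_assoc y, ZModModule.add_self, add_zero, add_assoc (g y), ZModModule.add_self,
      add_zero, ZModModule.add_self]

theorem map_add_eq_of_mem_fibre_directions {Z : Type*} (φ : G → Z)
    (hfib : ∀ z, ∃ (c : G) (W : Submodule (ZMod 2) G), {y | φ y = z} = (c + ·) '' (W : Set G))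
    {v : G} (hdir : ∀ z, ∃ w u, φ w = z ∧ φ u = z ∧ v = w + u) (y : G) : φ (y + v) = φ y := by
  obtain ⟨c, W, hS⟩ := hfib (φ y)
  obtain ⟨w, u, hw, hu, rfl⟩ := hdir (φ y)
  have hmem : ∀ x, φ x = φ y → x ∈ (c + ·) '' (W : Set G) := fun x hx => hS ▸ hx
  have := add_sub_mem_image_add_left (hmem y rfl) (hmem w hw) (hmem u hu)
  rw [← hS, ZModModule.sub_eq_add] at this
  exact this

theorem add_add_add_eq_zero_of_snd_mem_span_singleton {k : ℕ} (φ : G → (Fin k → ZMod 2))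
    (h : G → ZMod 2) (f : (Fin k → ZMod 2) × G → ZMod 2)
    (hf : ∀ x y, f (x, y) = dotp x (φ y) + h y) {v : G} (hper : ∀ y, φ (y + v) = φ y)
    {a b : (Fin k → ZMod 2) × G} (ha : a.2 ∈ (ZMod 2) ∙ v) (hb : b.2 ∈ (ZMod 2) ∙ v)
    (p : (Fin k → ZMod 2) × G) : f p + f (p + a) + f (p + b) + f (p + a + b) = 0 := by
  obtain ⟨x, y⟩ := p
  obtain ⟨a₁, a₂⟩ := a
  obtain ⟨b₁, b₂⟩ := b
  have hφ : ∀ t ∈ (ZMod 2) ∙ v, φ (y + t) = φ y := by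
    intro t ht
    rcases ZModModule.mem_span_singleton_two.mp ht with rfl | rfl
    exacts [congrArg φ (add_zero y), hper y]
  have hh := add_add_add_eq_zero_of_mem_span_singleton h ha hb y
  rw [add_assoc y] at hh
  simp only [Prod.mk_add_mk, hf, add_assoc y, hφ _ ha, hφ _ hb, hφ _ (add_mem ha hb),
    dotp_add_left]
  -- the `x`-parts sum to `4 X + 2 A + 2 B`
  linear_combination (norm := ring_nf) hh
  reduce_mod_char

end ZModTwo

theorem common_direction_implies_MM_general {m : ℕ} (hm : 2 ≤ m)
    (φ : (Fin (m + 1) → ZMod 2) → (Fin (m - 1) → ZMod 2))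
    (h : (Fin (m + 1) → ZMod 2) → ZMod 2)
    (f : (Fin (m - 1) → ZMod 2) × (Fin (m + 1) → ZMod 2) → ZMod 2)
    (hf : ∀ x y, f (x, y) = dotp x (φ y) + h y)
    (hflat : ∀ a, Is2Flat {y | φ y = a})
    (v : Fin (m + 1) → ZMod 2) (hv : v ≠ 0)
    (hdir : ∀ z : Fin (m - 1) → ZMod 2, ∃ w u, φ w = z ∧ φ u = z ∧ v = w + u) :
    Module.finrank (ZMod 2)
        ↥(Submodule.span (ZMod 2)
          ({p : (Fin (m - 1) → ZMod 2) × (Fin (m + 1) → ZMod 2) | p.2 = 0} ∪ {(0, v)})) = m ∧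
      ∀ a ∈ Submodule.span (ZMod 2)
          ({p : (Fin (m - 1) → ZMod 2) × (Fin (m + 1) → ZMod 2) | p.2 = 0} ∪ {(0, v)}),
        ∀ b ∈ Submodule.span (ZMod 2)
          ({p : (Fin (m - 1) → ZMod 2) × (Fin (m + 1) → ZMod 2) | p.2 = 0} ∪ {(0, v)}),
          ∀ p, f p + f (p + a) + f (p + b) + f (p + a + b) = 0 := by
  have hper : ∀ y, φ (y + v) = φ y := map_add_eq_of_mem_fibre_directions φ
    (fun z => (hflat z).imp fun _ ⟨W, _, hS⟩ => ⟨W, hS⟩) hdir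
  rw [Submodule.span_setOf_snd_eq_zero_union_singleton]
  refine ⟨?_, fun a ha b hb => add_add_add_eq_zero_of_snd_mem_span_singleton φ h f hf hper
    (Submodule.mem_prod.mp ha).2 (Submodule.mem_prod.mp hb).2⟩
  rw [Submodule.finrank_prod, finrank_top, Module.finrank_fin_fun, finrank_span_singleton hv]
  omega

/-- if a common direction `v` lies in the direction space of every flat
`φ⁻¹(z)`, then all second-order derivatives of `f` vanish on the `m`-dimensional
subspace `⟨F₂^{m-1} × {0}, (0,v)⟩`; in particular `f ∈ M^#` (Dillon's criterion). -/
theorem common_direction_implies_MM {m : ℕ} (hm : 2 ≤ m)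
    (φ : (Fin (m + 1) → ZMod 2) → (Fin (m - 1) → ZMod 2))
    (h : (Fin (m + 1) → ZMod 2) → ZMod 2)
    (f : (Fin (m - 1) → ZMod 2) × (Fin (m + 1) → ZMod 2) → ZMod 2)
    (hf : ∀ x y, f (x, y) = dotp x (φ y) + h y)
    (hflat : ∀ a, Is2Flat {y | φ y = a})
    (hodd : ∀ a, Odd ((Finset.univ.filter fun y => φ y = a ∧ h y = 1)).card)
    (v : Fin (m + 1) → ZMod 2) (hv : v ≠ 0)
    (hdir : ∀ z : Fin (m - 1) → ZMod 2, ∃ w u, φ w = z ∧ φ u = z ∧ v = w + u) :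
    Module.finrank (ZMod 2)
        ↥(Submodule.span (ZMod 2)
          ({p : (Fin (m - 1) → ZMod 2) × (Fin (m + 1) → ZMod 2) | p.2 = 0} ∪ {(0, v)})) = m ∧
      ∀ a ∈ Submodule.span (ZMod 2)
          ({p : (Fin (m - 1) → ZMod 2) × (Fin (m + 1) → ZMod 2) | p.2 = 0} ∪ {(0, v)}),
        ∀ b ∈ Submodule.span (ZMod 2)
          ({p : (Fin (m - 1) → ZMod 2) × (Fin (m + 1) → ZMod 2) | p.2 = 0} ∪ {(0, v)}),
          ∀ p, f p + f (p + a) + f (p + b) + f (p + a + b) = 0 :=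
  common_direction_implies_MM_general hm φ h f hf hflat v hv hdir
end

section
/- Let y₁, y₂, y₃, y₄ ∈ F₂^(m+1) be distinct with y₁ + y₂ + y₃ + y₄ = 0, and let h₁, ..., h₄ be Boolean functions each of odd weight on {y₁,...,y₄}. Then Σ_{i=1}^4 Σ_{j=1}^4 hᵢ(yⱼ)·yⱼ = 0 in F₂^(m+1) if and only if either Σ_{i=1}^4 hᵢ(yⱼ) = 0 for all j = 1,...,4, or Σ_{i=1}^4 hᵢ(yⱼ) = 1 for all j = 1,...,4. -/
/-! Swapping the two sums turns the vector into `∑ⱼ gⱼ • yⱼ` with `gⱼ = ∑ᵢ hᵢ(yⱼ)`, and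
`∑ⱼ gⱼ = 4 = 0`, so it is the sum of an even number of the `yⱼ`. None or all four of them
sum to `0`, whereas two distinct vectors never cancel over `F₂`. -/

open Finset

section ZModTwoModule

variable {ι V : Type*} [AddCommGroup V] [Module (ZMod 2) V]

lemma ZModModule.add_eq_zero_iff_eq {x y : V} : x + y = 0 ↔ x = y := by
  rw [← ZModModule.sub_eq_add, sub_eq_zero]

lemma ZMod.ne_one_iff_eq_zero_two {z : ZMod 2} : z ≠ 1 ↔ z = 0 := by
  revert z; decide

lemma sum_smul_eq_sum_filter_eq_one [Fintype ι] (g : ι → ZMod 2) (v : ι → V) :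
    ∑ j, g j • v j = ∑ j ∈ univ.filter (g · = 1), v j := by
  rw [sum_filter]
  refine sum_congr rfl fun j _ => ?_
  by_cases hj : g j = 1
  · simp [hj]
  · simp [ZMod.ne_one_iff_eq_zero_two.mp hj]

lemma sum_eq_card_filter_eq_one [Fintype ι] (g : ι → ZMod 2) :
    ∑ j, g j = #(univ.filter (g · = 1)) := by
  simpa using sum_smul_eq_sum_filter_eq_one g (fun _ => (1 : ZMod 2))

lemma ZModModule.add_ne_zero_of_injective {v : ι → V} (hv : Function.Injective v) {a b : ι}
    (hab : a ≠ b) : v a + v b ≠ 0 :=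
  fun h => hab (hv (ZModModule.add_eq_zero_iff_eq.mp h))

theorem sum_eq_zero_iff_of_even_card [Fintype ι] (hι : Fintype.card ι = 4)
    {v : ι → V} (hv : Function.Injective v) (hv0 : ∑ j, v j = 0)
    {S : Finset ι} (hS : Even #S) :
    ∑ j ∈ S, v j = 0 ↔ S = ∅ ∨ S = univ := by
  classical
  have hS4 : #S ≤ 4 := hι ▸ card_le_univ S
  obtain hS0 | hS2 | hS4 : #S = 0 ∨ #S = 2 ∨ #S = 4 := by
    obtain ⟨k, hk⟩ := hS; omega
  · obtain rfl := card_eq_zero.mp hS0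
    simp
  · obtain ⟨a, b, hab, rfl⟩ := card_eq_two.mp hS2
    have hne : ∑ j ∈ {a, b}, v j ≠ 0 := by
      rw [sum_pair hab]
      exact ZModModule.add_ne_zero_of_injective hv hab
    refine iff_of_false hne ?_
    rintro (h | h) <;> simp [h, hι] at hS2
  · obtain rfl := eq_univ_of_card S (hS4.trans hι.symm)
    simp [hv0]

theorem sum_smul_eq_zero_iff_of_card_eq_four [Fintype ι] (hι : Fintype.card ι = 4)
    {v : ι → V} (hv : Function.Injective v) (hv0 : ∑ j, v j = 0)
    {g : ι → ZMod 2} (hg : ∑ j, g j = 0) :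
    ∑ j, g j • v j = 0 ↔ (∀ j, g j = 0) ∨ (∀ j, g j = 1) := by
  have heven : Even #(univ.filter (g · = 1)) := by
    rwa [sum_eq_card_filter_eq_one, ZMod.natCast_eq_zero_iff_even] at hg
  rw [sum_smul_eq_sum_filter_eq_one, sum_eq_zero_iff_of_even_card hι hv hv0 heven,
    filter_eq_empty_iff, filter_eq_self]
  simp [ZMod.ne_one_iff_eq_zero_two]

end ZModTwoModule

/-- under the same hypotheses, `Σᵢ Σⱼ hᵢ(yⱼ)·yⱼ = 0` iff the sums
`Σᵢ hᵢ(yⱼ)` are all `0` or all `1`. -/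
theorem sum_smul_eq_zero_iff {m : ℕ}
    (y : Fin 4 → (Fin (m + 1) → ZMod 2)) (hy : Function.Injective y)
    (hsum : ∑ j, y j = 0)
    (h : Fin 4 → ((Fin (m + 1) → ZMod 2) → ZMod 2))
    (hodd : ∀ i, ∑ j, h i (y j) = 1) :
    (∑ i : Fin 4, ∑ j : Fin 4, h i (y j) • y j = 0) ↔
      ((∀ j, ∑ i, h i (y j) = 0) ∨ (∀ j, ∑ i, h i (y j) = 1)) := by
  have hg : ∑ j, ∑ i, h i (y j) = 0 := by
    rw [sum_comm]
    simp only [hodd, sum_const, card_univ, Fintype.card_fin]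
    decide
  rw [sum_comm]
  simp only [← sum_smul]
  exact sum_smul_eq_zero_iff_of_card_eq_four (Fintype.card_fin 4) hy hsum hg
end

section
/- Let Φ : F₂^(n/2+k) → F₂^(n/2+k) be a permutation whose coordinate functions Φ_{j₁}, ..., Φ_{j_{n/2-k}} (for some index subset of size n/2-k) satisfy ∩_{i=1}^{n/2-k} L^{(D_a Φ_{jᵢ})} = {0, a} for every nonzero a. Then the mapping φ : F₂^(n/2+k) → F₂^(n/2-k) obtained by keeping only those n/2-k coordinates satisfies (P₁*): D_a D_b φ ≠ 0 for all linearly independent a, b. -/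
open Finset

/-- Property `(P₁*)`. -/
def P1star {p q : ℕ} (φ : (Fin p → ZMod 2) → (Fin q → ZMod 2)) : Prop :=
  ∀ v w : Fin p → ZMod 2, LinearIndependent (ZMod 2) ![v, w] →
    ∃ y, φ y + φ (y + v) + φ (y + w) + φ (y + v + w) ≠ 0

/-- `secondDiff g a b = D_b D_a g`, where `D_a g x = g x + g (x + a)`. -/
def secondDiff {V M : Type*} [Add V] [Add M] (g : V → M) (a b : V) (x : V) : M :=
  g x + g (x + a) + g (x + b) + g (x + a + b)

/-- `linearitySpace g a` is the paper's `L^{(D_a g)}`. -/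
def linearitySpace {V M : Type*} [Add V] [Add M] (g : V → M) (a : V) : Set V :=
  {v | ∃ c, ∀ x, secondDiff g v a x = c}

section

variable {V M : Type*} [AddCommGroup V] [AddCommMonoid M]

theorem secondDiff_comm (g : V → M) (a b x : V) : secondDiff g a b x = secondDiff g b a x := by
  simp only [secondDiff, add_right_comm x a b]
  abel

theorem mem_linearitySpace_of_secondDiff_eq_zero {g : V → M} {a b : V}
    (h : ∀ x, secondDiff g a b x = 0) : b ∈ linearitySpace g a :=
  ⟨0, fun x => secondDiff_comm g b a x ▸ h x⟩

end

theorem LinearIndependent.notMem_pair {R M : Type*} [Ring R] [Nontrivial R] [AddCommGroup M]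
    [Module R M] {v w : M} (h : LinearIndependent R ![v, w]) : w ∉ ({0, v} : Set M) := by
  rintro (hw | hwv)
  · exact h.ne_zero 1 hw
  · exact zero_ne_one (h.injective (hwv.symm ▸ rfl : ![v, w] 0 = ![v, w] 1))

/-- If `D_a D_b φ = 0` then `b` lies in every `L^{(D_a φ_i)}`, which forces `b ∈ {0, a}`. -/
theorem P1star_of_iInter_linearitySpace {p q : ℕ}
    (φ : (Fin p → ZMod 2) → (Fin q → ZMod 2))
    (hL : ∀ a, a ≠ 0 → ⋂ i, linearitySpace (fun y => φ y i) a = {0, a}) :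
    P1star φ := by
  intro a b hab
  by_contra! h
  have hb : b ∈ ⋂ i, linearitySpace (fun y => φ y i) a :=
    Set.mem_iInter.2 fun i => mem_linearitySpace_of_secondDiff_eq_zero fun x => congrFun (h x) i
  rw [hL a (hab.ne_zero 0)] at hb
  exact hab.notMem_pair hb

theorem P1star_of_removing_coordinates_general {n k : ℕ}
    (Φ : (Fin (n / 2 + k) → ZMod 2) → (Fin (n / 2 + k) → ZMod 2))
    (j : Fin (n / 2 - k) → Fin (n / 2 + k))
    (hL : ∀ a : Fin (n / 2 + k) → ZMod 2, a ≠ 0 →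
      {v : Fin (n / 2 + k) → ZMod 2 |
          ∀ i : Fin (n / 2 - k), ∃ c : ZMod 2,
            ∀ x, Φ x (j i) + Φ (x + v) (j i) + Φ (x + a) (j i) + Φ (x + v + a) (j i) = c} =
        ({0, a} : Set (Fin (n / 2 + k) → ZMod 2))) :
    P1star (fun y i => Φ y (j i)) := by
  refine P1star_of_iInter_linearitySpace _ fun a ha => ?_
  rw [← hL a ha]
  ext v
  simp only [Set.mem_iInter, linearitySpace, secondDiff, Set.mem_ofPred_eq]

/-- removing coordinates of a permutation `Φ` of `F₂^{n/2+k}` whose kept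
coordinates `Φ_{j₁},…,Φ_{j_{n/2-k}}` satisfy `∩ᵢ L^{(D_a Φ_{jᵢ})} = {0,a}` for every
nonzero `a`, yields a mapping `φ : F₂^{n/2+k} → F₂^{n/2-k}` satisfying `(P₁*)`. -/
theorem P1star_of_removing_coordinates {n k : ℕ}
    (Φ : (Fin (n / 2 + k) → ZMod 2) → (Fin (n / 2 + k) → ZMod 2))
    (hΦ : Function.Bijective Φ)
    (j : Fin (n / 2 - k) → Fin (n / 2 + k)) (hj : Function.Injective j)
    (hL : ∀ a : Fin (n / 2 + k) → ZMod 2, a ≠ 0 →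
      {v : Fin (n / 2 + k) → ZMod 2 |
          ∀ i : Fin (n / 2 - k), ∃ c : ZMod 2,
            ∀ x, Φ x (j i) + Φ (x + v) (j i) + Φ (x + a) (j i) + Φ (x + v + a) (j i) = c} =
        ({0, a} : Set (Fin (n / 2 + k) → ZMod 2))) :
    P1star (fun y i => Φ y (j i)) :=
  P1star_of_removing_coordinates_general Φ j hL
end

section
/- Let f : F₂^(2m) → F₂ be a bent function in GMM_{m+1}, i.e., f(x',y') = x'·φ(y') + h(y') with x' ∈ F₂^(m-1), y' ∈ F₂^(m+1), satisfying the bentness conditions. Then f belongs to the strict Maiorana–McFarland class M (i.e., f(x,y) = x·π(y) + g(y) for a permutation π of F₂^m after identifying F₂^(2m) = F₂^m × F₂^m in the canonical way) if and only if f can be written with φ and h satisfying: (1) φ(x_m, y) does not depend on its first coordinate x_m (writing y' = (x_m, y) with y ∈ F₂^m); and (2) the Boolean function h'(y) := h(0,y) + h(1,y) on F₂^m is balanced and the map y ↦ (φ₁(y), ..., φ_{m-1}(y), h'(y)) is a permutation of F₂^m. -/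
open Finset

/-
Comparing coefficients of the affine functions `x ↦ x·a + c` shows that a representation
`f(x', y') = x'·φ(y') + h(y')` determines `φ` and `h`. If `f(x, x_m, y) = (x, x_m)·π(y) + g(y)`,
then `φ(x_m, y)` is the first `m` coordinates of `π(y)` and `h(x_m, y) = g(y) + x_m π(y)_m`,
so `φ` ignores `x_m`, `h(0,y) + h(1,y) = π(y)_m`, and the map `y ↦ (φ(0,y), h'(y))` is `π`
itself; `h'` is balanced as a coordinate of a permutation. Conversely, every function on `F₂`
is affine, `h(x_m, y) = h(0,y) + x_m h'(y)`, which gives the strict form with `g(y) = h(0,y)`.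
-/

lemma eq_and_eq_of_dotp_add_eq {k : ℕ} {a b : Fin k → ZMod 2} {c d : ZMod 2}
    (H : ∀ x, dotp x a + c = dotp x b + d) : a = b ∧ c = d := by
  have hcd : c = d := by simpa [dotp] using H 0
  refine ⟨funext fun i => ?_, hcd⟩
  simpa [dotp, Pi.single_apply, ite_mul, hcd] using H (Pi.single i 1)

lemma dotp_snoc {k : ℕ} (x : Fin k → ZMod 2) (xm : ZMod 2) (v : Fin (k + 1) → ZMod 2) :
    dotp (Fin.snoc x xm) v = dotp x (Fin.init v) + xm * v (Fin.last k) := by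
  simp [dotp, Fin.sum_univ_castSucc, Fin.init]

lemma ZMod.two_apply_eq (u : ZMod 2 → ZMod 2) (c : ZMod 2) : u c = u 0 + c * (u 0 + u 1) := by
  obtain rfl | rfl : c = 0 ∨ c = 1 := by decide +revert
  · rw [zero_mul, add_zero]
  · rw [one_mul, ← add_assoc, CharTwo.add_self_eq_zero, zero_add]

lemma card_filter_comp_of_bijective {α β : Type*} [Fintype α] [Fintype β] {π : α → β}
    (hπ : Function.Bijective π) (p : β → Prop) [DecidablePred p] :
    #(univ.filter fun a => p (π a)) = #(univ.filter p) := by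
  simpa only [Fintype.card_subtype] using
    Fintype.card_congr ((Equiv.ofBijective π hπ).subtypeEquiv fun _ => Iff.rfl :
      {a // p (π a)} ≃ {b // p b})

lemma card_filter_last_eq {α : Type*} [Fintype α] [DecidableEq α] (k : ℕ) (a : α) :
    #(univ.filter fun v : Fin (k + 1) → α => v (Fin.last k) = a) = Fintype.card α ^ k := by
  rw [show Fintype.card α ^ k = #(univ : Finset (Fin k → α)) by simp]
  refine card_nbij' Fin.init (fun w => Fin.snoc w a) (by simp) (by simp) ?_
    fun _ _ => Fin.init_snoc _ _
  intro v hv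
  rw [mem_coe, mem_filter] at hv
  simpa [hv.2] using Fin.snoc_init_self v

lemma gmm_components_of_strict_form {m : ℕ} {f : (Fin m → ZMod 2) × (Fin (m + 2) → ZMod 2) → ZMod 2}
    {φ : (Fin (m + 2) → ZMod 2) → (Fin m → ZMod 2)} {h : (Fin (m + 2) → ZMod 2) → ZMod 2}
    {π : (Fin (m + 1) → ZMod 2) → (Fin (m + 1) → ZMod 2)} {g : (Fin (m + 1) → ZMod 2) → ZMod 2}
    (hf : ∀ x y, f (x, y) = dotp x (φ y) + h y)
    (hg : ∀ x xm y, f (x, Fin.cons xm y) = dotp (Fin.snoc x xm) (π y) + g y)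
    (xm : ZMod 2) (y : Fin (m + 1) → ZMod 2) :
    φ (Fin.cons xm y) = Fin.init (π y) ∧ h (Fin.cons xm y) = g y + xm * π y (Fin.last m) := by
  refine eq_and_eq_of_dotp_add_eq fun x => ?_
  rw [← hf, hg, dotp_snoc, add_assoc, add_comm (g y)]

/-- a bent `f ∈ GMM_{m+1}` on `F₂^m × F₂^{m+2}` (here the paper's `m-1`
is `m` and `m+1` is `m+1`) is in the strict Maiorana–McFarland class — i.e., after the
canonical identification `F₂^{2(m+1)} = F₂^{m+1} × F₂^{m+1}` (the full first block is
`(x, x_m)` and `y' = (x_m, y)`) it equals `(x,y) ↦ x·π(y) + g(y)` for a permutation `π`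
— iff `f` can be written as `x'·φ(y') + h(y')` with `φ, h` satisfying the bentness
conditions together with: (1) `φ` does not depend on the first coordinate of `y'`;
(2) `h'(y) = h(0,y) + h(1,y)` is balanced and extends `φ` to a permutation of `F₂^{m+1}`. -/
theorem GMM_in_strict_MM_iff {m : ℕ}
    (f : (Fin m → ZMod 2) × (Fin (m + 2) → ZMod 2) → ZMod 2)
    (φ₀ : (Fin (m + 2) → ZMod 2) → (Fin m → ZMod 2))
    (h₀ : (Fin (m + 2) → ZMod 2) → ZMod 2)
    (hf : ∀ x y, f (x, y) = dotp x (φ₀ y) + h₀ y)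
    (hflat : ∀ a, Is2Flat {y | φ₀ y = a})
    (hodd : ∀ a, Odd ((Finset.univ.filter fun y => φ₀ y = a ∧ h₀ y = 1)).card) :
    (∃ π : (Fin (m + 1) → ZMod 2) → (Fin (m + 1) → ZMod 2), Function.Bijective π ∧
        ∃ g : (Fin (m + 1) → ZMod 2) → ZMod 2,
          ∀ (x : Fin m → ZMod 2) (xm : ZMod 2) (y : Fin (m + 1) → ZMod 2),
            f (x, Fin.cons xm y) = dotp (Fin.snoc x xm) (π y) + g y) ↔
      (∃ (φ : (Fin (m + 2) → ZMod 2) → (Fin m → ZMod 2))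
          (h : (Fin (m + 2) → ZMod 2) → ZMod 2),
        (∀ x y, f (x, y) = dotp x (φ y) + h y) ∧
        (∀ a, Is2Flat {y | φ y = a}) ∧
        (∀ a, Odd ((Finset.univ.filter fun y => φ y = a ∧ h y = 1)).card) ∧
        (∀ (c c' : ZMod 2) (y : Fin (m + 1) → ZMod 2),
          φ (Fin.cons c y) = φ (Fin.cons c' y)) ∧
        ((Finset.univ.filter fun y : Fin (m + 1) → ZMod 2 =>
            h (Fin.cons 0 y) + h (Fin.cons 1 y) = 1).card = 2 ^ m) ∧
        Function.Bijective
          (fun y : Fin (m + 1) → ZMod 2 =>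
            (Fin.snoc (φ (Fin.cons 0 y)) (h (Fin.cons 0 y) + h (Fin.cons 1 y)) :
              Fin (m + 1) → ZMod 2))) := by
  constructor
  · rintro ⟨π, hπ, g, hg⟩
    have hrep := gmm_components_of_strict_form hf hg
    have hsum (y : Fin (m + 1) → ZMod 2) :
        h₀ (Fin.cons 0 y) + h₀ (Fin.cons 1 y) = π y (Fin.last m) := by
      rw [(hrep 0 y).2, (hrep 1 y).2, zero_mul, add_zero, one_mul, ← add_assoc,
        CharTwo.add_self_eq_zero, zero_add]
    have hperm : (fun y : Fin (m + 1) → ZMod 2 =>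
        (Fin.snoc (φ₀ (Fin.cons 0 y)) (h₀ (Fin.cons 0 y) + h₀ (Fin.cons 1 y)) :
          Fin (m + 1) → ZMod 2)) = π :=
      funext fun y => by rw [(hrep 0 y).1, hsum, Fin.snoc_init_self]
    refine ⟨φ₀, h₀, hf, hflat, hodd, fun c c' y => ?_, ?_, hperm ▸ hπ⟩
    · rw [(hrep c y).1, (hrep c' y).1]
    · simp only [hsum]
      rw [card_filter_comp_of_bijective hπ (fun v => v (Fin.last m) = 1),
        card_filter_last_eq, ZMod.card]
  · rintro ⟨φ, h, hφh, -, -, hindep, -, hbij⟩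
    refine ⟨_, hbij, fun y => h (Fin.cons 0 y), fun x xm y => ?_⟩
    rw [hφh, dotp_snoc, Fin.init_snoc, Fin.snoc_last, hindep xm 0 y,
      ZMod.two_apply_eq (fun c => h (Fin.cons c y)) xm]
    ring
end
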